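/- arXiv:1410.7617 — 2 statements merged into one kernel-verified Lean document; each statement's English description precedes it below -/
import Mathlib

section
/- Fix Δξ > 0, Δt > 0, c ∈ ℝ, θ ∈ [−1,1], and J ∈ ℤ, and set ξ_j = (j−J)Δξ for j ∈ ℤ (so ξ_J = 0). For a finitely supported sequence g : ℤ → ℝ, the momentum conservative upwind (MCU(θ)) flux is F^{(θ)}_{j+1/2} = F^{(0)}_{j+1/2} − (cθΔξ/2)(g_{j+1} − g_j), where F^{(0)}_{j+1/2} = c ξ_j g_j for j ≥ J and c ξ_{j+1} g_{j+1} for j ≤ J−1 when c > 0, and F^{(0)}_{j+1/2} = c ξ_j g_j for j ≤ J−1 and c ξ_{j+1} g_{j+1} for j ≥ J when c < 0. One step of the finite-volume scheme maps g to g' with g'_j = g_j − (Δt/Δξ)(F^{(θ)}_{j+1/2} − F^{(θ)}_{j−1/2}). Let g⁰ : ℤ → ℝ be finitely supported (with arbitrary, possibly nonzero, momentum) and let gⁿ be the sequence after n steps. Then the discrete momentum Mⁿ := Δξ Σ_j ξ_j gⁿ_j satisfies M^{n+1} = (1 + cΔt) Mⁿ for all n, and hence Mⁿ = (1 + cΔt)ⁿ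 M⁰. -/
open Function

/-- shift invariance of finsum over ℤ -/
lemma mcu_finsum_shift (f : ℤ → ℝ) (k : ℤ) : ∑ᶠ j : ℤ, f (j + k) = ∑ᶠ j : ℤ, f j :=
  finsum_comp_equiv (Equiv.addRight k)

lemma mcu_supp_shift {f : ℤ → ℝ} (hf : (support f).Finite) (k : ℤ) :
    (support fun j : ℤ => f (j + k)).Finite := by
  have hsub : (support fun j : ℤ => f (j + k)) ⊆ (fun j : ℤ => j + k) ⁻¹' support f :=
    fun j hj => hj
  exact Set.Finite.subset (hf.preimage (add_left_injective k).injOn) hsub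

lemma mcu_supp_shift' {f : ℤ → ℝ} (hf : (support f).Finite) (k : ℤ) :
    (support fun j : ℤ => f (j - k)).Finite := by
  simpa [sub_eq_add_neg] using mcu_supp_shift hf (-k)

lemma mcu_telescope {s : ℤ → ℝ} (hs : (support s).Finite) :
    ∑ᶠ j : ℤ, (s (j + 1) - s j) = 0 := by
  rw [finsum_sub_distrib (mcu_supp_shift hs 1) hs, mcu_finsum_shift, sub_self]

lemma mcu_telescope' {s : ℤ → ℝ} (hs : (support s).Finite) :
    ∑ᶠ j : ℤ, (s j - s (j - 1)) = 0 := by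
  have h1 : ∑ᶠ j : ℤ, s (j - 1) = ∑ᶠ j : ℤ, s j := by
    simpa [sub_eq_add_neg] using mcu_finsum_shift s (-1)
  rw [finsum_sub_distrib hs (mcu_supp_shift' hs 1), h1, sub_self]

lemma mcu_tsum_eq_finsum (f : ℤ → ℝ) (hf : (support f).Finite) :
    ∑' j : ℤ, f j = ∑ᶠ j : ℤ, f j := by
  rw [finsum_eq_sum f hf, tsum_eq_sum]
  intro b hb
  by_contra h
  exact hb (hf.mem_toFinset.2 h)

/-- Grid points `ξ_j = (j − J)Δξ`. -/
noncomputable def mcuXi (Δξ : ℝ) (J : ℤ) (j : ℤ) : ℝ := ((j - J : ℤ) : ℝ) * Δξ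

/-- Base upwind flux `F^{(0)}_{j+1/2}` for drift speed `c`. -/
noncomputable def mcuF0 (Δξ c : ℝ) (J : ℤ) (g : ℤ → ℝ) (j : ℤ) : ℝ :=
  if 0 < c then
    (if J ≤ j then c * mcuXi Δξ J j * g j else c * mcuXi Δξ J (j + 1) * g (j + 1))
  else
    (if j ≤ J - 1 then c * mcuXi Δξ J j * g j else c * mcuXi Δξ J (j + 1) * g (j + 1))

/-- The momentum conservative upwind flux
`F^{(θ)}_{j+1/2} = F^{(0)}_{j+1/2} − (cθΔξ/2)(g_{j+1} − g_j)`. -/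
noncomputable def mcuFlux (Δξ c θ : ℝ) (J : ℤ) (g : ℤ → ℝ) (j : ℤ) : ℝ :=
  mcuF0 Δξ c J g j - c * θ * Δξ / 2 * (g (j + 1) - g j)

/-- One step of the MCU(θ) finite-volume scheme:
`g'_j = g_j − (Δt/Δξ)(F^{(θ)}_{j+1/2} − F^{(θ)}_{j−1/2})`. -/
noncomputable def mcuStep (Δξ Δt c θ : ℝ) (J : ℤ) (g : ℤ → ℝ) (j : ℤ) : ℝ :=
  g j - Δt / Δξ * (mcuFlux Δξ c θ J g j - mcuFlux Δξ c θ J g (j - 1))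

/-- `n` steps of the MCU(θ) scheme starting from `g0`. -/
noncomputable def mcuIter (Δξ Δt c θ : ℝ) (J : ℤ) (g0 : ℤ → ℝ) : ℕ → ℤ → ℝ
  | 0 => g0
  | n + 1 => mcuStep Δξ Δt c θ J (mcuIter Δξ Δt c θ J g0 n)

lemma mcu_flux_zero (Δξ c θ : ℝ) (J : ℤ) (g : ℤ → ℝ) (j : ℤ)
    (h0 : g j = 0) (h1 : g (j + 1) = 0) : mcuFlux Δξ c θ J g j = 0 := by
  simp only [mcuFlux, mcuF0, h0, h1, mul_zero, sub_zero]
  split_ifs <;> simp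

lemma mcu_supp_flux {Δξ c θ : ℝ} {J : ℤ} {g : ℤ → ℝ} (hg : (support g).Finite) :
    (support (mcuFlux Δξ c θ J g)).Finite := by
  refine Set.Finite.subset (hg.union (mcu_supp_shift hg 1)) ?_
  intro j hj
  by_contra hc
  simp only [Set.mem_union, mem_support, not_or, not_not] at hc
  exact hj (mcu_flux_zero Δξ c θ J g j hc.1 hc.2)

lemma mcu_supp_step {Δξ Δt c θ : ℝ} {J : ℤ} {g : ℤ → ℝ} (hg : (support g).Finite) :
    (support (mcuStep Δξ Δt c θ J g)).Finite := by
  have hF := mcu_supp_flux (Δξ := Δξ) (c := c) (θ := θ) (J := J) hg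
  refine Set.Finite.subset ((hg.union hF).union (mcu_supp_shift' hF 1)) ?_
  intro j hj
  by_contra hc
  simp only [Set.mem_union, mem_support, not_or, not_not] at hc
  apply hj
  simp only [mcuStep, hc.1.1, hc.1.2, hc.2, sub_zero, mul_zero, zero_sub, neg_zero]

lemma mcu_supp_xi_mul {Δξ Δt c θ : ℝ} {J : ℤ} {f : ℤ → ℝ} (hf : (support f).Finite) :
    (support fun j => mcuXi Δξ J j * f j).Finite :=
  Set.Finite.subset hf (fun j hj h0 => hj (by simp [h0]))

lemma mcu_F0_sum (Δξ c : ℝ) (J : ℤ) (g : ℤ → ℝ) (hg : (support g).Finite) :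
    ∑ᶠ j : ℤ, mcuF0 Δξ c J g j = ∑ᶠ j : ℤ, c * mcuXi Δξ J j * g j := by
  set h : ℤ → ℝ := fun j => c * mcuXi Δξ J j * g j with hh
  have hhfin : (support h).Finite :=
    Set.Finite.subset hg (fun j hj h0 => hj (by simp [hh, h0]))
  by_cases hc : 0 < c
  · set s : ℤ → ℝ := fun j => if j ≤ J then h j else 0 with hs
    have hsfin : (support s).Finite := by
      refine Set.Finite.subset hhfin (fun j hj => ?_)
      intro h0; apply hj; simp [hs, h0]
    have key : ∀ j, mcuF0 Δξ c J g j = h j + (s (j + 1) - s j) := by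
      intro j
      simp only [mcuF0, if_pos hc, hs, hh]
      rcases lt_trichotomy j J with h1 | h1 | h1
      · rw [if_neg (by omega), if_pos (by omega), if_pos (by omega)]; ring
      · subst h1
        rw [if_pos le_rfl, if_neg (by omega), if_pos le_rfl]
        simp [mcuXi]
      · rw [if_pos (by omega), if_neg (by omega), if_neg (by omega)]; ring
    rw [finsum_congr key, finsum_add_distrib hhfin
      (Set.Finite.subset ((mcu_supp_shift hsfin 1).union hsfin)
        (fun j hj => by
          by_contra hcon
          simp only [Set.mem_union, mem_support, not_or, not_not] at hcon
          exact hj (by simp [hcon.1, hcon.2]))),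
      mcu_telescope hsfin, add_zero]
  · set s : ℤ → ℝ := fun j => if J ≤ j then h j else 0 with hs
    have hsfin : (support s).Finite := by
      refine Set.Finite.subset hhfin (fun j hj => ?_)
      intro h0; apply hj; simp [hs, h0]
    have key : ∀ j, mcuF0 Δξ c J g j = h j + (s (j + 1) - s j) := by
      intro j
      simp only [mcuF0, if_neg hc, hs, hh]
      rcases lt_trichotomy j (J - 1) with h1 | h1 | h1
      · rw [if_pos (by omega), if_neg (by omega), if_neg (by omega)]; ring
      · rw [if_pos (by omega), if_pos (by omega), if_neg (by omega),
          show j + 1 = J by omega]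
        simp [mcuXi]
      · rw [if_neg (by omega), if_pos (by omega), if_pos (by omega)]; ring
    rw [finsum_congr key, finsum_add_distrib hhfin
      (Set.Finite.subset ((mcu_supp_shift hsfin 1).union hsfin)
        (fun j hj => by
          by_contra hcon
          simp only [Set.mem_union, mem_support, not_or, not_not] at hcon
          exact hj (by simp [hcon.1, hcon.2]))),
      mcu_telescope hsfin, add_zero]

lemma mcu_flux_sum (Δξ c θ : ℝ) (J : ℤ) (g : ℤ → ℝ) (hg : (support g).Finite) :
    ∑ᶠ j : ℤ, mcuFlux Δξ c θ J g j = c * ∑ᶠ j : ℤ, mcuXi Δξ J j * g j := by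
  have hF0fin : (support (mcuF0 Δξ c J g)).Finite := by
    refine Set.Finite.subset (hg.union (mcu_supp_shift hg 1)) ?_
    intro j hj
    by_contra hcon
    simp only [Set.mem_union, mem_support, not_or, not_not] at hcon
    apply hj
    simp only [mcuF0, hcon.1, hcon.2, mul_zero]
    split_ifs <;> rfl
  have htel : (support fun j : ℤ => c * θ * Δξ / 2 * (g (j + 1) - g j)).Finite := by
    refine Set.Finite.subset ((mcu_supp_shift hg 1).union hg) ?_
    intro j hj
    by_contra hcon
    simp only [Set.mem_union, mem_support, not_or, not_not] at hcon
    exact hj (by simp [hcon.1, hcon.2])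
  have : ∀ j : ℤ, mcuFlux Δξ c θ J g j
      = mcuF0 Δξ c J g j - c * θ * Δξ / 2 * (g (j + 1) - g j) := fun j => rfl
  rw [finsum_congr this, finsum_sub_distrib hF0fin htel,
    ← mul_finsum _ (c * θ * Δξ / 2),
    mcu_telescope hg, mul_zero, sub_zero, mcu_F0_sum Δξ c J g hg,
    mul_finsum (fun j => mcuXi Δξ J j * g j) c]
  exact finsum_congr fun j => by ring

lemma mcu_step_momentum (Δξ Δt c θ : ℝ) (hΔξ : Δξ ≠ 0) (J : ℤ) (g : ℤ → ℝ)
    (hg : (support g).Finite) :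
    ∑ᶠ j : ℤ, mcuXi Δξ J j * mcuStep Δξ Δt c θ J g j
      = (1 + c * Δt) * ∑ᶠ j : ℤ, mcuXi Δξ J j * g j := by
  set F : ℤ → ℝ := mcuFlux Δξ c θ J g with hF
  have hFfin : (support F).Finite := mcu_supp_flux hg
  set v : ℤ → ℝ := fun j => mcuXi Δξ J (j + 1) * F j with hv
  have hvfin : (support v).Finite :=
    Set.Finite.subset hFfin (fun j hj h0 => hj (by simp [hv, h0]))
  have hAfin : (support fun j => mcuXi Δξ J j * g j).Finite :=
    mcu_supp_xi_mul (Δξ := Δξ) (Δt := Δt) (c := c) (θ := θ) hg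
  have hxi : ∀ j : ℤ, mcuXi Δξ J (j + 1) = mcuXi Δξ J j + Δξ := by
    intro j; simp only [mcuXi]; push_cast; ring
  have e1 : ∀ j : ℤ, mcuXi Δξ J j * mcuStep Δξ Δt c θ J g j
      = (mcuXi Δξ J j * g j + Δt * F j) - Δt / Δξ * (v j - v (j - 1)) := by
    intro j
    simp only [mcuStep, hv, hxi j, show j - 1 + 1 = j by omega, ← hF]
    field_simp
    ring
  have hDfin : (support fun j : ℤ => Δt / Δξ * (v j - v (j - 1))).Finite := by
    refine Set.Finite.subset (hvfin.union (mcu_supp_shift' hvfin 1)) ?_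
    intro j hj
    by_contra hcon
    simp only [Set.mem_union, mem_support, not_or, not_not] at hcon
    exact hj (by simp [hcon.1, hcon.2])
  have hBfin : (support fun j : ℤ => mcuXi Δξ J j * g j + Δt * F j).Finite := by
    refine Set.Finite.subset (hAfin.union hFfin) ?_
    intro j hj
    by_contra hcon
    simp only [Set.mem_union, mem_support, not_or, not_not] at hcon
    exact hj (by simp [hcon.1, hcon.2])
  rw [finsum_congr e1, finsum_sub_distrib hBfin hDfin,
    ← mul_finsum _ (Δt / Δξ),
    mcu_telescope' hvfin, mul_zero, sub_zero,
    finsum_add_distrib hAfin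
      (Set.Finite.subset hFfin (fun j hj h0 => hj (by simp [h0]))),
    ← mul_finsum _ Δt, hF, mcu_flux_sum Δξ c θ J g hg]
  ring

lemma mcu_supp_iter (Δξ Δt c θ : ℝ) (J : ℤ) (g0 : ℤ → ℝ)
    (hg0 : (support g0).Finite) (n : ℕ) :
    (support (mcuIter Δξ Δt c θ J g0 n)).Finite := by
  induction n with
  | zero => exact hg0
  | succ n ih => exact mcu_supp_step ih

/-- The discrete momentum of the MCU(θ) scheme is amplified by exactly
`(1 + cΔt)` per step: `M^{n+1} = (1 + cΔt) Mⁿ`, hence `Mⁿ = (1 + cΔt)ⁿ M⁰`. -/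
theorem mcu_momentum_amplification
    (Δξ Δt : ℝ) (hΔξ : 0 < Δξ) (hΔt : 0 < Δt) (c : ℝ)
    (θ : ℝ) (hθ : θ ∈ Set.Icc (-1 : ℝ) 1) (J : ℤ)
    (g0 : ℤ → ℝ) (hg0 : (Function.support g0).Finite)
    (M : ℕ → ℝ)
    (hM : ∀ n, M n = Δξ * ∑' j : ℤ, mcuXi Δξ J j * mcuIter Δξ Δt c θ J g0 n j) :
    (∀ n : ℕ, M (n + 1) = (1 + c * Δt) * M n) ∧
    (∀ n : ℕ, M n = (1 + c * Δt) ^ n * M 0) := by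
  have key : ∀ n : ℕ, M (n + 1) = (1 + c * Δt) * M n := by
    intro n
    have hfin := mcu_supp_iter Δξ Δt c θ J g0 hg0 n
    have hit : mcuIter Δξ Δt c θ J g0 (n + 1)
        = mcuStep Δξ Δt c θ J (mcuIter Δξ Δt c θ J g0 n) := rfl
    rw [hM (n + 1), hM n, hit,
      mcu_tsum_eq_finsum _ (mcu_supp_xi_mul (Δξ := Δξ) (Δt := Δt) (c := c) (θ := θ)
        (mcu_supp_step hfin)),
      mcu_tsum_eq_finsum _ (mcu_supp_xi_mul (Δξ := Δξ) (Δt := Δt) (c := c) (θ := θ) hfin)]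
    rw [mcu_step_momentum Δξ Δt c θ hΔξ.ne' J _ hfin]
    ring
  refine ⟨key, ?_⟩
  intro n
  induction n with
  | zero => simp
  | succ n ih => rw [key n, ih, pow_succ]; ring
end

section
/- Fix Δξ > 0, Δt > 0, L > 0, c ∈ ℝ, θ ∈ [−1,1] with cθ ≥ 0, and J ∈ ℤ, and set ξ_j = (j−J)Δξ for j ∈ ℤ (so ξ_J = 0). For a finitely supported sequence g : ℤ → ℝ, the momentum conservative upwind (MCU(θ)) flux is F^{(θ)}_{j+1/2} = F^{(0)}_{j+1/2} − (cθΔξ/2)(g_{j+1} − g_j), where F^{(0)}_{j+1/2} = c ξ_j g_j for j ≥ J and c ξ_{j+1} g_{j+1} for j ≤ J−1 when c > 0, and F^{(0)}_{j+1/2} = c ξ_j g_j for j ≤ J−1 and c ξ_{j+1} g_{j+1} for j ≥ J when c < 0. One step of the finite-volume scheme maps g to g' with g'_j = g_j − (Δt/Δξ)(F^{(θ)}_{j+1/2} − F^{(θ)}_{j−1/2}). Let g⁰ : ℤ → ℝ satisfy g⁰_j ≥ 0 for all j and g⁰_j = 0 whenever |ξ_j| ≥ L, assume the CFL condition Δt/Δξ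 ≤ 1/(|c| L), and suppose the iterates gⁿ remain supported in {j : |ξ_j| < L}. Then the scheme is l¹-stable: Σ_j |gⁿ_j| = Σ_j |g⁰_j| for all n ≥ 0. -/
lemma mcuXi_def (Δξ : ℝ) (J j : ℤ) : mcuXi Δξ J j = ((j:ℝ) - (J:ℝ)) * Δξ := by
  unfold mcuXi; push_cast; ring

lemma mcuXi_succ (Δξ : ℝ) (J j : ℤ) : mcuXi Δξ J (j+1) = mcuXi Δξ J j + Δξ := by
  rw [mcuXi_def, mcuXi_def]; push_cast; ring

lemma mcuXi_J (Δξ : ℝ) (J : ℤ) : mcuXi Δξ J J = 0 := by simp [mcuXi]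

lemma mcuXi_nonneg (Δξ : ℝ) (hΔξ : 0 < Δξ) (J j : ℤ) (h : J ≤ j) : 0 ≤ mcuXi Δξ J j := by
  rw [mcuXi_def]
  have : (J:ℝ) ≤ (j:ℝ) := by exact_mod_cast h
  nlinarith

lemma mcuXi_ge (Δξ : ℝ) (hΔξ : 0 < Δξ) (J j : ℤ) (h : J + 1 ≤ j) : Δξ ≤ mcuXi Δξ J j := by
  rw [mcuXi_def]
  have : (J:ℝ) + 1 ≤ (j:ℝ) := by exact_mod_cast h
  nlinarith

lemma mcuXi_nonpos (Δξ : ℝ) (hΔξ : 0 < Δξ) (J j : ℤ) (h : j ≤ J) : mcuXi Δξ J j ≤ 0 := by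
  rw [mcuXi_def]
  have : (j:ℝ) ≤ (J:ℝ) := by exact_mod_cast h
  nlinarith

lemma mcuXi_le (Δξ : ℝ) (hΔξ : 0 < Δξ) (J j : ℤ) (h : j ≤ J - 1) : mcuXi Δξ J j ≤ -Δξ := by
  rw [mcuXi_def]
  have : (j:ℝ) ≤ (J:ℝ) - 1 := by exact_mod_cast (by omega : j ≤ J - 1)
  nlinarith

lemma flux_pos_ge (Δξ c θ : ℝ) (J : ℤ) (g : ℤ → ℝ) (j : ℤ) (hc : 0 < c) (hj : J ≤ j) :
    mcuFlux Δξ c θ J g j = c * mcuXi Δξ J j * g j - c * θ * Δξ / 2 * (g (j+1) - g j) := by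
  unfold mcuFlux mcuF0; rw [if_pos hc, if_pos hj]

lemma flux_pos_lt (Δξ c θ : ℝ) (J : ℤ) (g : ℤ → ℝ) (j : ℤ) (hc : 0 < c) (hj : ¬ J ≤ j) :
    mcuFlux Δξ c θ J g j = c * mcuXi Δξ J (j+1) * g (j+1) - c * θ * Δξ / 2 * (g (j+1) - g j) := by
  unfold mcuFlux mcuF0; rw [if_pos hc, if_neg hj]

lemma flux_neg_le (Δξ c θ : ℝ) (J : ℤ) (g : ℤ → ℝ) (j : ℤ) (hc : ¬ 0 < c) (hj : j ≤ J - 1) :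
    mcuFlux Δξ c θ J g j = c * mcuXi Δξ J j * g j - c * θ * Δξ / 2 * (g (j+1) - g j) := by
  unfold mcuFlux mcuF0; rw [if_neg hc, if_pos hj]

lemma flux_neg_gt (Δξ c θ : ℝ) (J : ℤ) (g : ℤ → ℝ) (j : ℤ) (hc : ¬ 0 < c) (hj : ¬ j ≤ J - 1) :
    mcuFlux Δξ c θ J g j = c * mcuXi Δξ J (j+1) * g (j+1) - c * θ * Δξ / 2 * (g (j+1) - g j) := by
  unfold mcuFlux mcuF0; rw [if_neg hc, if_neg hj]

set_option maxHeartbeats 2000000 in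
lemma mcuStep_nonneg
    (Δξ Δt L : ℝ) (hΔξ : 0 < Δξ) (hΔt : 0 < Δt) (hL : 0 < L) (c θ : ℝ)
    (hθ1 : -1 ≤ θ) (hθ2 : θ ≤ 1) (hcθ : 0 ≤ c * θ) (J : ℤ)
    (hCFL : Δt / Δξ ≤ 1 / (|c| * L))
    (g : ℤ → ℝ) (hg : ∀ j, 0 ≤ g j)
    (hsupp : ∀ j, L ≤ |mcuXi Δξ J j| → g j = 0)
    (hsupp' : ∀ j, L ≤ |mcuXi Δξ J j| → mcuStep Δξ Δt c θ J g j = 0)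
    (j : ℤ) : 0 ≤ mcuStep Δξ Δt c θ J g j := by
  have hlam : 0 < Δt / Δξ := div_pos hΔt hΔξ
  have hc0 : c ≠ 0 := by
    intro h
    rw [h] at hCFL
    simp at hCFL
    linarith
  have hCL : 0 < |c| * L := mul_pos (abs_pos.mpr hc0) hL
  have hCFL2 : Δt / Δξ * (|c| * L) ≤ 1 := by
    rw [le_div_iff₀ hCL] at hCFL; linarith
  have hμ : 0 ≤ c * θ * Δξ / 2 := by positivity
  have hcabs : c * θ ≤ |c| := by
    calc c * θ = |c * θ| := (abs_of_nonneg hcθ).symm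
    _ = |c| * |θ| := abs_mul c θ
    _ ≤ |c| * 1 := mul_le_mul_of_nonneg_left (abs_le.mpr ⟨hθ1, hθ2⟩) (abs_nonneg c)
    _ = |c| := mul_one _
  have hμΔ : c * θ * Δξ ≤ |c| * Δξ := mul_le_mul_of_nonneg_right hcabs hΔξ.le
  rcases hc0.lt_or_gt with hc | hc
  · -- c < 0
    have habs : |c| = -c := abs_of_neg hc
    have hμΔ' : c * θ * Δξ ≤ -c * Δξ := by have h := hμΔ; rw [habs] at h; exact h
    have hc' : ¬ (0 < c) := not_lt.mpr hc.le
    rcases lt_trichotomy J j with hj | hj | hj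
    · -- c < 0, J < j
      have hexp : mcuStep Δξ Δt c θ J g j
          = (Δt/Δξ) * (c*θ*Δξ/2 - c * mcuXi Δξ J (j+1)) * g (j+1)
            + (1 + (Δt/Δξ) * (c * mcuXi Δξ J j - c*θ*Δξ)) * g j
            + (Δt/Δξ) * (c*θ*Δξ/2) * g (j-1) := by
        unfold mcuStep
        rw [flux_neg_gt Δξ c θ J g j hc' (by omega),
            flux_neg_gt Δξ c θ J g (j-1) hc' (by omega), Int.sub_add_cancel]
        ring
      rw [hexp]
      have t1 : 0 ≤ (Δt/Δξ) * (c*θ*Δξ/2 - c * mcuXi Δξ J (j+1)) * g (j+1) := by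
        have h1 : 0 ≤ mcuXi Δξ J (j+1) := mcuXi_nonneg Δξ hΔξ J (j+1) (by omega)
        have h2 : c * mcuXi Δξ J (j+1) ≤ 0 := mul_nonpos_of_nonpos_of_nonneg hc.le h1
        exact mul_nonneg (mul_nonneg hlam.le (by linarith)) (hg _)
      have t3 : 0 ≤ (Δt/Δξ) * (c*θ*Δξ/2) * g (j-1) :=
        mul_nonneg (mul_nonneg hlam.le hμ) (hg _)
      have t2 : 0 ≤ (1 + (Δt/Δξ) * (c * mcuXi Δξ J j - c*θ*Δξ)) * g j := by
        by_cases hgj : g j = 0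
        · rw [hgj]; simp
        · apply mul_nonneg _ (hg j)
          have hinj : |mcuXi Δξ J j| < L := not_le.mp (mt (hsupp j) hgj)
          have hxj : mcuXi Δξ J j < L := lt_of_abs_lt hinj
          have hb2key : ∀ h2 : c * θ * Δξ - c * mcuXi Δξ J j ≤ |c| * L,
              0 ≤ 1 + (Δt/Δξ) * (c * mcuXi Δξ J j - c*θ*Δξ) := by
            intro h2
            have h4 := mul_le_mul_of_nonneg_left h2 hlam.le
            nlinarith
          by_cases hb : mcuXi Δξ J j + Δξ ≤ L
          · apply hb2key
            rw [habs]
            have h3 := mul_le_mul_of_nonneg_left hb (by linarith : (0:ℝ) ≤ -c)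
            nlinarith
          · -- boundary at j+1
            have e1 := mcuXi_succ Δξ J j
            have e2 := mcuXi_succ Δξ J (j+1)
            have hb1 : L ≤ |mcuXi Δξ J (j+1)| :=
              le_trans (by linarith [not_le.mp hb]) (le_abs_self _)
            have hb2 : L ≤ |mcuXi Δξ J (j+1+1)| :=
              le_trans (by linarith [not_le.mp hb]) (le_abs_self _)
            have hz1 : g (j+1) = 0 := hsupp _ hb1
            have hz2 : g (j+1+1) = 0 := hsupp _ hb2
            have h0 : mcuStep Δξ Δt c θ J g (j+1) = 0 := hsupp' _ hb1
            have hexp2 : mcuStep Δξ Δt c θ J g (j+1)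
                = (Δt/Δξ) * (c*θ*Δξ/2 * g j) := by
              unfold mcuStep
              rw [flux_neg_gt Δξ c θ J g (j+1) hc' (by omega), Int.add_sub_cancel,
                  flux_neg_gt Δξ c θ J g j hc' (by omega), hz1, hz2]
              ring
            rw [hexp2] at h0
            rcases mul_eq_zero.mp h0 with h | h
            · exact absurd h hlam.ne'
            rcases mul_eq_zero.mp h with h' | h'
            · -- μ' = 0
              apply hb2key
              rw [habs]
              have h'' : c*θ*Δξ = 0 := by linarith
              have h3 := mul_le_mul_of_nonneg_left hxj.le (by linarith : (0:ℝ) ≤ -c)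
              nlinarith
            · exact absurd h' hgj
      linarith
    · -- c < 0, j = J
      subst hj
      have hexp : mcuStep Δξ Δt c θ J g J
          = (Δt/Δξ) * (c*θ*Δξ/2 - c * mcuXi Δξ J (J+1)) * g (J+1)
            + (1 - (Δt/Δξ) * (c*θ*Δξ)) * g J
            + (Δt/Δξ) * (c*θ*Δξ/2 + c * mcuXi Δξ J (J-1)) * g (J-1) := by
        unfold mcuStep
        rw [flux_neg_gt Δξ c θ J g J hc' (by omega),
            flux_neg_le Δξ c θ J g (J-1) hc' (by omega), Int.sub_add_cancel]
        ring
      rw [hexp]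
      have t1 : 0 ≤ (Δt/Δξ) * (c*θ*Δξ/2 - c * mcuXi Δξ J (J+1)) * g (J+1) := by
        have h1 : 0 ≤ mcuXi Δξ J (J+1) := mcuXi_nonneg Δξ hΔξ J (J+1) (by omega)
        have h2 : c * mcuXi Δξ J (J+1) ≤ 0 := mul_nonpos_of_nonpos_of_nonneg hc.le h1
        exact mul_nonneg (mul_nonneg hlam.le (by linarith)) (hg _)
      have t3 : 0 ≤ (Δt/Δξ) * (c*θ*Δξ/2 + c * mcuXi Δξ J (J-1)) * g (J-1) := by
        have h1 : mcuXi Δξ J (J-1) ≤ 0 := mcuXi_nonpos Δξ hΔξ J (J-1) (by omega)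
        have h2 : 0 ≤ c * mcuXi Δξ J (J-1) := by nlinarith [mul_nonneg (neg_nonneg.mpr hc.le) (neg_nonneg.mpr h1)]
        exact mul_nonneg (mul_nonneg hlam.le (by linarith)) (hg _)
      have t2 : 0 ≤ (1 - (Δt/Δξ) * (c*θ*Δξ)) * g J := by
        by_cases hgj : g J = 0
        · rw [hgj]; simp
        · apply mul_nonneg _ (hg J)
          by_cases hb : Δξ ≤ L
          · have h2 : c * θ * Δξ ≤ |c| * L :=
              le_trans hμΔ (mul_le_mul_of_nonneg_left hb (abs_nonneg c))
            have h4 := mul_le_mul_of_nonneg_left h2 hlam.le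
            linarith
          · -- boundary at J+1
            have e1 := mcuXi_succ Δξ J J
            have e2 := mcuXi_succ Δξ J (J+1)
            have eJ : mcuXi Δξ J J = 0 := mcuXi_J Δξ J
            have hb1 : L ≤ |mcuXi Δξ J (J+1)| :=
              le_trans (by linarith [not_le.mp hb]) (le_abs_self _)
            have hb2 : L ≤ |mcuXi Δξ J (J+1+1)| :=
              le_trans (by linarith [not_le.mp hb]) (le_abs_self _)
            have hz1 : g (J+1) = 0 := hsupp _ hb1
            have hz2 : g (J+1+1) = 0 := hsupp _ hb2
            have h0 : mcuStep Δξ Δt c θ J g (J+1) = 0 := hsupp' _ hb1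
            have hexp2 : mcuStep Δξ Δt c θ J g (J+1)
                = (Δt/Δξ) * (c*θ*Δξ/2 * g J) := by
              unfold mcuStep
              rw [flux_neg_gt Δξ c θ J g (J+1) hc' (by omega), Int.add_sub_cancel,
                  flux_neg_gt Δξ c θ J g J hc' (by omega), hz1, hz2]
              ring
            rw [hexp2] at h0
            rcases mul_eq_zero.mp h0 with h | h
            · exact absurd h hlam.ne'
            rcases mul_eq_zero.mp h with h' | h'
            · have h'' : Δt/Δξ * (c*θ*Δξ) = 0 := by
                have : c*θ*Δξ = 0 := by linarith
                rw [this, mul_zero]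
              linarith
            · exact absurd h' hgj
      linarith
    · -- c < 0, j < J
      have hexp : mcuStep Δξ Δt c θ J g j
          = (Δt/Δξ) * (c*θ*Δξ/2) * g (j+1)
            + (1 - (Δt/Δξ) * (c * mcuXi Δξ J j + c*θ*Δξ)) * g j
            + (Δt/Δξ) * (c * mcuXi Δξ J (j-1) + c*θ*Δξ/2) * g (j-1) := by
        unfold mcuStep
        rw [flux_neg_le Δξ c θ J g j hc' (by omega),
            flux_neg_le Δξ c θ J g (j-1) hc' (by omega), Int.sub_add_cancel]
        ring
      rw [hexp]
      have t1 : 0 ≤ (Δt/Δξ) * (c*θ*Δξ/2) * g (j+1) :=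
        mul_nonneg (mul_nonneg hlam.le hμ) (hg _)
      have t3 : 0 ≤ (Δt/Δξ) * (c * mcuXi Δξ J (j-1) + c*θ*Δξ/2) * g (j-1) := by
        have h1 : mcuXi Δξ J (j-1) ≤ 0 := mcuXi_nonpos Δξ hΔξ J (j-1) (by omega)
        have h2 : 0 ≤ c * mcuXi Δξ J (j-1) := by nlinarith [mul_nonneg (neg_nonneg.mpr hc.le) (neg_nonneg.mpr h1)]
        exact mul_nonneg (mul_nonneg hlam.le (by linarith)) (hg _)
      have t2 : 0 ≤ (1 - (Δt/Δξ) * (c * mcuXi Δξ J j + c*θ*Δξ)) * g j := by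
        by_cases hgj : g j = 0
        · rw [hgj]; simp
        · apply mul_nonneg _ (hg j)
          have hinj : |mcuXi Δξ J j| < L := not_le.mp (mt (hsupp j) hgj)
          have hxj : -L < mcuXi Δξ J j := (abs_lt.mp hinj).1
          have hb2key : ∀ h2 : c * mcuXi Δξ J j + c * θ * Δξ ≤ |c| * L,
              0 ≤ 1 - (Δt/Δξ) * (c * mcuXi Δξ J j + c*θ*Δξ) := by
            intro h2
            have h4 := mul_le_mul_of_nonneg_left h2 hlam.le
            nlinarith
          by_cases hb : -(mcuXi Δξ J j) + Δξ ≤ L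
          · apply hb2key
            rw [habs]
            have h3 := mul_le_mul_of_nonneg_left hb (by linarith : (0:ℝ) ≤ -c)
            nlinarith
          · -- boundary at j-1
            have e1' := mcuXi_succ Δξ J (j-1)
            rw [Int.sub_add_cancel] at e1'
            have e2' := mcuXi_succ Δξ J (j-1-1)
            rw [Int.sub_add_cancel] at e2'
            have hb1 : L ≤ |mcuXi Δξ J (j-1)| := by
              refine le_trans ?_ (neg_le_abs _)
              linarith [not_le.mp hb]
            have hb2 : L ≤ |mcuXi Δξ J (j-1-1)| := by
              refine le_trans ?_ (neg_le_abs _)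
              linarith [not_le.mp hb]
            have hz1 : g (j-1) = 0 := hsupp _ hb1
            have hz2 : g (j-1-1) = 0 := hsupp _ hb2
            have h0 : mcuStep Δξ Δt c θ J g (j-1) = 0 := hsupp' _ hb1
            have hexp2 : mcuStep Δξ Δt c θ J g (j-1)
                = (Δt/Δξ) * (c*θ*Δξ/2 * g j) := by
              unfold mcuStep
              rw [flux_neg_le Δξ c θ J g (j-1) hc' (by omega), Int.sub_add_cancel,
                  flux_neg_le Δξ c θ J g (j-1-1) hc' (by omega), Int.sub_add_cancel,
                  hz1, hz2]
              ring
            rw [hexp2] at h0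
            rcases mul_eq_zero.mp h0 with h | h
            · exact absurd h hlam.ne'
            rcases mul_eq_zero.mp h with h' | h'
            · apply hb2key
              rw [habs]
              have h'' : c*θ*Δξ = 0 := by linarith
              have h3 := mul_le_mul_of_nonneg_left
                (show -(mcuXi Δξ J j) ≤ L by linarith) (by linarith : (0:ℝ) ≤ -c)
              nlinarith
            · exact absurd h' hgj
      linarith
  · -- c > 0
    have habs : |c| = c := abs_of_pos hc
    have hμΔ' : c * θ * Δξ ≤ c * Δξ := by have h := hμΔ; rw [habs] at h; exact h
    rcases lt_trichotomy J j with hj | hj | hj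
    · -- c > 0, J < j
      have hexp : mcuStep Δξ Δt c θ J g j
          = (Δt/Δξ) * (c*θ*Δξ/2) * g (j+1)
            + (1 - (Δt/Δξ) * (c * mcuXi Δξ J j + c*θ*Δξ)) * g j
            + (Δt/Δξ) * (c * mcuXi Δξ J (j-1) + c*θ*Δξ/2) * g (j-1) := by
        unfold mcuStep
        rw [flux_pos_ge Δξ c θ J g j hc hj.le,
            flux_pos_ge Δξ c θ J g (j-1) hc (by omega), Int.sub_add_cancel]
        ring
      rw [hexp]
      have t1 : 0 ≤ (Δt/Δξ) * (c*θ*Δξ/2) * g (j+1) :=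
        mul_nonneg (mul_nonneg hlam.le hμ) (hg _)
      have t3 : 0 ≤ (Δt/Δξ) * (c * mcuXi Δξ J (j-1) + c*θ*Δξ/2) * g (j-1) := by
        have h1 : 0 ≤ mcuXi Δξ J (j-1) := mcuXi_nonneg Δξ hΔξ J (j-1) (by omega)
        have h2 : 0 ≤ c * mcuXi Δξ J (j-1) := mul_nonneg hc.le h1
        exact mul_nonneg (mul_nonneg hlam.le (by linarith)) (hg _)
      have t2 : 0 ≤ (1 - (Δt/Δξ) * (c * mcuXi Δξ J j + c*θ*Δξ)) * g j := by
        by_cases hgj : g j = 0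
        · rw [hgj]; simp
        · apply mul_nonneg _ (hg j)
          have hinj : |mcuXi Δξ J j| < L := not_le.mp (mt (hsupp j) hgj)
          have hxj : mcuXi Δξ J j < L := lt_of_abs_lt hinj
          by_cases hb : mcuXi Δξ J j + Δξ ≤ L
          · have h3 := mul_le_mul_of_nonneg_left hb hc.le
            have h2 : c * mcuXi Δξ J j + c * θ * Δξ ≤ |c| * L := by
              rw [habs]; nlinarith
            have h4 := mul_le_mul_of_nonneg_left h2 hlam.le
            nlinarith
          · -- boundary at j+1
            exfalso
            have e1 := mcuXi_succ Δξ J j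
            have e2 := mcuXi_succ Δξ J (j+1)
            have hb1 : L ≤ |mcuXi Δξ J (j+1)| :=
              le_trans (by linarith [not_le.mp hb]) (le_abs_self _)
            have hb2 : L ≤ |mcuXi Δξ J (j+1+1)| :=
              le_trans (by linarith [not_le.mp hb]) (le_abs_self _)
            have hz1 : g (j+1) = 0 := hsupp _ hb1
            have hz2 : g (j+1+1) = 0 := hsupp _ hb2
            have h0 : mcuStep Δξ Δt c θ J g (j+1) = 0 := hsupp' _ hb1
            have hexp2 : mcuStep Δξ Δt c θ J g (j+1)
                = (Δt/Δξ) * ((c * mcuXi Δξ J j + c*θ*Δξ/2) * g j) := by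
              unfold mcuStep
              rw [flux_pos_ge Δξ c θ J g (j+1) hc (by omega), Int.add_sub_cancel,
                  flux_pos_ge Δξ c θ J g j hc hj.le, hz1, hz2]
              ring
            rw [hexp2] at h0
            have hfac : 0 < c * mcuXi Δξ J j + c*θ*Δξ/2 := by
              have h5 : Δξ ≤ mcuXi Δξ J j := mcuXi_ge Δξ hΔξ J j (by omega)
              nlinarith
            rcases mul_eq_zero.mp h0 with h | h
            · exact absurd h hlam.ne'
            rcases mul_eq_zero.mp h with h' | h'
            · exact absurd h' hfac.ne'
            · exact absurd h' hgj
      linarith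
    · -- c > 0, j = J
      subst hj
      have hexp : mcuStep Δξ Δt c θ J g J
          = (Δt/Δξ) * (c*θ*Δξ/2) * g (J+1)
            + (1 - (Δt/Δξ) * (c*θ*Δξ)) * g J
            + (Δt/Δξ) * (c*θ*Δξ/2) * g (J-1) := by
        unfold mcuStep
        rw [flux_pos_ge Δξ c θ J g J hc le_rfl,
            flux_pos_lt Δξ c θ J g (J-1) hc (by omega), Int.sub_add_cancel,
            mcuXi_J]
        ring
      rw [hexp]
      have t1 : 0 ≤ (Δt/Δξ) * (c*θ*Δξ/2) * g (J+1) :=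
        mul_nonneg (mul_nonneg hlam.le hμ) (hg _)
      have t3 : 0 ≤ (Δt/Δξ) * (c*θ*Δξ/2) * g (J-1) :=
        mul_nonneg (mul_nonneg hlam.le hμ) (hg _)
      have t2 : 0 ≤ (1 - (Δt/Δξ) * (c*θ*Δξ)) * g J := by
        by_cases hgj : g J = 0
        · rw [hgj]; simp
        · apply mul_nonneg _ (hg J)
          by_cases hb : Δξ ≤ L
          · have h2 : c * θ * Δξ ≤ |c| * L :=
              le_trans hμΔ (mul_le_mul_of_nonneg_left hb (abs_nonneg c))
            have h4 := mul_le_mul_of_nonneg_left h2 hlam.le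
            linarith
          · -- boundary at J+1
            have e1 := mcuXi_succ Δξ J J
            have e2 := mcuXi_succ Δξ J (J+1)
            have eJ : mcuXi Δξ J J = 0 := mcuXi_J Δξ J
            have hb1 : L ≤ |mcuXi Δξ J (J+1)| :=
              le_trans (by linarith [not_le.mp hb]) (le_abs_self _)
            have hb2 : L ≤ |mcuXi Δξ J (J+1+1)| :=
              le_trans (by linarith [not_le.mp hb]) (le_abs_self _)
            have hz1 : g (J+1) = 0 := hsupp _ hb1
            have hz2 : g (J+1+1) = 0 := hsupp _ hb2
            have h0 : mcuStep Δξ Δt c θ J g (J+1) = 0 := hsupp' _ hb1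
            have hexp2 : mcuStep Δξ Δt c θ J g (J+1)
                = (Δt/Δξ) * (c*θ*Δξ/2 * g J) := by
              unfold mcuStep
              rw [flux_pos_ge Δξ c θ J g (J+1) hc (by omega), Int.add_sub_cancel,
                  flux_pos_ge Δξ c θ J g J hc le_rfl, hz1, hz2, mcuXi_J]
              ring
            rw [hexp2] at h0
            rcases mul_eq_zero.mp h0 with h | h
            · exact absurd h hlam.ne'
            rcases mul_eq_zero.mp h with h' | h'
            · have h'' : Δt/Δξ * (c*θ*Δξ) = 0 := by
                have : c*θ*Δξ = 0 := by linarith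
                rw [this, mul_zero]
              linarith
            · exact absurd h' hgj
      linarith
    · -- c > 0, j < J
      have hexp : mcuStep Δξ Δt c θ J g j
          = (Δt/Δξ) * (c*θ*Δξ/2 - c * mcuXi Δξ J (j+1)) * g (j+1)
            + (1 + (Δt/Δξ) * (c * mcuXi Δξ J j - c*θ*Δξ)) * g j
            + (Δt/Δξ) * (c*θ*Δξ/2) * g (j-1) := by
        unfold mcuStep
        rw [flux_pos_lt Δξ c θ J g j hc (by omega),
            flux_pos_lt Δξ c θ J g (j-1) hc (by omega), Int.sub_add_cancel]
        ring
      rw [hexp]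
      have t1 : 0 ≤ (Δt/Δξ) * (c*θ*Δξ/2 - c * mcuXi Δξ J (j+1)) * g (j+1) := by
        have h1 : mcuXi Δξ J (j+1) ≤ 0 := mcuXi_nonpos Δξ hΔξ J (j+1) (by omega)
        have h2 : c * mcuXi Δξ J (j+1) ≤ 0 := mul_nonpos_of_nonneg_of_nonpos hc.le h1
        exact mul_nonneg (mul_nonneg hlam.le (by linarith)) (hg _)
      have t3 : 0 ≤ (Δt/Δξ) * (c*θ*Δξ/2) * g (j-1) :=
        mul_nonneg (mul_nonneg hlam.le hμ) (hg _)
      have t2 : 0 ≤ (1 + (Δt/Δξ) * (c * mcuXi Δξ J j - c*θ*Δξ)) * g j := by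
        by_cases hgj : g j = 0
        · rw [hgj]; simp
        · apply mul_nonneg _ (hg j)
          have hinj : |mcuXi Δξ J j| < L := not_le.mp (mt (hsupp j) hgj)
          have hxj : -L < mcuXi Δξ J j := (abs_lt.mp hinj).1
          by_cases hb : -(mcuXi Δξ J j) + Δξ ≤ L
          · have h3 := mul_le_mul_of_nonneg_left hb hc.le
            have h2 : c * θ * Δξ - c * mcuXi Δξ J j ≤ |c| * L := by
              rw [habs]; nlinarith
            have h4 := mul_le_mul_of_nonneg_left h2 hlam.le
            nlinarith
          · -- boundary at j-1
            exfalso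
            have e1' := mcuXi_succ Δξ J (j-1)
            rw [Int.sub_add_cancel] at e1'
            have e2' := mcuXi_succ Δξ J (j-1-1)
            rw [Int.sub_add_cancel] at e2'
            have hb1 : L ≤ |mcuXi Δξ J (j-1)| := by
              refine le_trans ?_ (neg_le_abs _)
              linarith [not_le.mp hb]
            have hb2 : L ≤ |mcuXi Δξ J (j-1-1)| := by
              refine le_trans ?_ (neg_le_abs _)
              linarith [not_le.mp hb]
            have hz1 : g (j-1) = 0 := hsupp _ hb1
            have hz2 : g (j-1-1) = 0 := hsupp _ hb2
            have h0 : mcuStep Δξ Δt c θ J g (j-1) = 0 := hsupp' _ hb1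
            have hexp2 : mcuStep Δξ Δt c θ J g (j-1)
                = (Δt/Δξ) * ((c*θ*Δξ/2 - c * mcuXi Δξ J j) * g j) := by
              unfold mcuStep
              rw [flux_pos_lt Δξ c θ J g (j-1) hc (by omega), Int.sub_add_cancel,
                  flux_pos_lt Δξ c θ J g (j-1-1) hc (by omega), Int.sub_add_cancel,
                  hz1, hz2]
              ring
            rw [hexp2] at h0
            have hfac : 0 < c*θ*Δξ/2 - c * mcuXi Δξ J j := by
              have h5 : mcuXi Δξ J j ≤ -Δξ := mcuXi_le Δξ hΔξ J j (by omega)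
              nlinarith
            rcases mul_eq_zero.mp h0 with h | h
            · exact absurd h hlam.ne'
            rcases mul_eq_zero.mp h with h' | h'
            · exact absurd h' hfac.ne'
            · exact absurd h' hgj
      linarith

lemma flux_zero (Δξ c θ : ℝ) (J : ℤ) (g : ℤ → ℝ) (j : ℤ)
    (h1 : g j = 0) (h2 : g (j+1) = 0) : mcuFlux Δξ c θ J g j = 0 := by
  unfold mcuFlux mcuF0; split_ifs <;> simp [h1, h2]

lemma mcuStep_tsum (Δξ Δt c θ : ℝ) (J : ℤ) (g : ℤ → ℝ)
    (s : Finset ℤ) (hs : ∀ j ∉ s, g j = 0) :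
    ∑' j : ℤ, mcuStep Δξ Δt c θ J g j = ∑' j : ℤ, g j := by
  have hgs : Summable g := summable_of_ne_finset_zero hs
  have hFz : ∀ j ∉ s ∪ s.image (· - 1), mcuFlux Δξ c θ J g j = 0 := by
    intro j hj
    rw [Finset.mem_union] at hj
    push_neg at hj
    apply flux_zero
    · exact hs j hj.1
    · apply hs
      intro hmem
      exact hj.2 (Finset.mem_image.mpr ⟨j + 1, hmem, by ring⟩)
  have hFs : Summable (mcuFlux Δξ c θ J g) := summable_of_ne_finset_zero hFz
  have hFs' : Summable (fun j : ℤ => mcuFlux Δξ c θ J g (j - 1)) :=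
    ((Equiv.subRight (1:ℤ)).summable_iff (f := mcuFlux Δξ c θ J g)).mpr hFs
  have hdiff : Summable (fun j : ℤ =>
      mcuFlux Δξ c θ J g j - mcuFlux Δξ c θ J g (j - 1)) := hFs.sub hFs'
  have h1 : ∑' j : ℤ, mcuStep Δξ Δt c θ J g j
      = ∑' j : ℤ, (g j - Δt / Δξ *
          (mcuFlux Δξ c θ J g j - mcuFlux Δξ c θ J g (j - 1))) := rfl
  rw [h1, Summable.tsum_sub hgs (hdiff.mul_left _), tsum_mul_left,
      Summable.tsum_sub hFs hFs']
  have h2 : ∑' j : ℤ, mcuFlux Δξ c θ J g (j - 1) = ∑' j : ℤ, mcuFlux Δξ c θ J g j := by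
    simpa using (Equiv.subRight (1:ℤ)).tsum_eq (mcuFlux Δξ c θ J g)
  rw [h2]
  ring


/-- l¹-stability of the MCU(θ) scheme: under the CFL condition and `cθ ≥ 0`,
for nonnegative initial data supported in the computational domain `[−L, L]`
whose iterates remain supported in `{j : |ξ_j| < L}`, the discrete l¹ norm is
conserved in time. -/
theorem mcu_l1_stability
    (Δξ Δt L : ℝ) (hΔξ : 0 < Δξ) (hΔt : 0 < Δt) (hL : 0 < L) (c : ℝ)
    (θ : ℝ) (hθ : θ ∈ Set.Icc (-1 : ℝ) 1) (hcθ : 0 ≤ c * θ) (J : ℤ)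
    (g0 : ℤ → ℝ)
    (hpos : ∀ j : ℤ, 0 ≤ g0 j)
    (hdom : ∀ j : ℤ, L ≤ |mcuXi Δξ J j| → g0 j = 0)
    (hCFL : Δt / Δξ ≤ 1 / (|c| * L))
    (hiter : ∀ n : ℕ, ∀ j : ℤ, L ≤ |mcuXi Δξ J j| → mcuIter Δξ Δt c θ J g0 n j = 0) :
    ∀ n : ℕ, (∑' j : ℤ, |mcuIter Δξ Δt c θ J g0 n j|) = ∑' j : ℤ, |g0 j| := by
  obtain ⟨hθ1, hθ2⟩ := hθ
  set N : ℤ := ⌈L / Δξ⌉ with hN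
  have hfin : ∀ m : ℕ, ∀ j ∉ Finset.Icc (J - N) (J + N), mcuIter Δξ Δt c θ J g0 m j = 0 := by
    intro m j hj
    apply hiter m j
    rw [Finset.mem_Icc] at hj
    push_neg at hj
    have hjN : N + 1 ≤ |j - J| := by
      rw [Int.abs_eq_natAbs]
      by_cases h : J - N ≤ j
      · have := hj h; omega
      · omega
    have h1 : L / Δξ ≤ (N : ℝ) := Int.le_ceil _
    have h2 : (N : ℝ) + 1 ≤ ((|j - J| : ℤ) : ℝ) := by exact_mod_cast hjN
    have h3 : |mcuXi Δξ J j| = ((|j - J| : ℤ) : ℝ) * Δξ := by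
      unfold mcuXi
      rw [abs_mul, abs_of_pos hΔξ, Int.cast_abs]
    rw [h3]
    have h4 : L / Δξ * Δξ ≤ ((|j - J| : ℤ) : ℝ) * Δξ := by
      apply mul_le_mul_of_nonneg_right _ hΔξ.le
      linarith
    rwa [div_mul_cancel₀ _ hΔξ.ne'] at h4
  have hpos' : ∀ m : ℕ, ∀ j : ℤ, 0 ≤ mcuIter Δξ Δt c θ J g0 m j := by
    intro m
    induction m with
    | zero => exact hpos
    | succ k ih =>
      intro j
      exact mcuStep_nonneg Δξ Δt L hΔξ hΔt hL c θ hθ1 hθ2 hcθ J hCFL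
        (mcuIter Δξ Δt c θ J g0 k) ih (fun i hi => hiter k i hi)
        (fun i hi => hiter (k+1) i hi) j
  have hmass : ∀ m : ℕ, ∑' j : ℤ, mcuIter Δξ Δt c θ J g0 m j = ∑' j : ℤ, g0 j := by
    intro m
    induction m with
    | zero => rfl
    | succ k ih =>
      rw [show mcuIter Δξ Δt c θ J g0 (k+1)
            = mcuStep Δξ Δt c θ J (mcuIter Δξ Δt c θ J g0 k) from rfl,
          mcuStep_tsum Δξ Δt c θ J _ _ (hfin k)]
      exact ih
  intro n
  have habs : ∀ m : ℕ, ∑' j : ℤ, |mcuIter Δξ Δt c θ J g0 m j|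
      = ∑' j : ℤ, mcuIter Δξ Δt c θ J g0 m j :=
    fun m => tsum_congr fun j => abs_of_nonneg (hpos' m j)
  calc ∑' j : ℤ, |mcuIter Δξ Δt c θ J g0 n j|
      = ∑' j : ℤ, mcuIter Δξ Δt c θ J g0 n j := habs n
    _ = ∑' j : ℤ, g0 j := hmass n
    _ = ∑' j : ℤ, |g0 j| := tsum_congr fun j => (abs_of_nonneg (hpos j)).symm
end
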